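/- arXiv:1811.07038 — 4 statements merged into one kernel-verified Lean document; each statement's English description precedes it below -/
import Mathlib

section
/- For every n, every κ>1, and every α∈[0,1]^n with ∏_{i=1}^n α_i ≥ κ^{−n} and all α_i > 0, there exists a finite set F of at most κ^n points, all lying in a single translate of the lattice 2α₁ℤ × ⋯ × 2α_nℤ, such that (1/2)B_∞^n ⊂ F + P_α. -/
theorem lattice_covering_cube_by_parallelepipeds :
    ∀ (n : ℕ) (κ : ℝ) (α : Fin n → ℝ),
      1 < κ → (∀ i, 0 < α i) → (∀ i, α i ≤ 1) →
      κ ^ (-(n : ℝ)) ≤ ∏ i, α i →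
      ∃ F : Finset (Fin n → ℝ),
        -- all points of `F` lie in a single translate of the lattice `2α₁ℤ × ⋯ × 2αₙℤ`
        (∃ v : Fin n → ℝ, ∀ f ∈ F, ∀ i, ∃ k : ℤ, f i = v i + 2 * α i * k) ∧
        (F.card : ℝ) ≤ κ ^ n ∧
        -- `(1/2)B_∞ⁿ ⊆ F + P_α`
        (∀ y : Fin n → ℝ, (∀ i, |y i| ≤ 1 / 2) →
          ∃ f ∈ F, ∀ i, |y i - f i| ≤ α i) := by
  intro n κ α hκ hpos hle hprod
  have hκ0 : (0:ℝ) < κ := lt_trans one_pos hκ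
  set m : Fin n → ℕ := fun i => ⌈1 / (2 * α i)⌉₊ with hm
  have h2a : ∀ i, (0:ℝ) < 2 * α i := fun i => by linarith [hpos i]
  have hm1 : ∀ i, 1 ≤ m i := fun i =>
    Nat.one_le_ceil_iff.mpr (by have := h2a i; positivity)
  have hcov : ∀ i, 1 ≤ 2 * α i * m i := by
    intro i
    have h1 : 1 / (2 * α i) ≤ (m i : ℝ) := Nat.le_ceil _
    have := mul_le_mul_of_nonneg_left h1 (le_of_lt (h2a i))
    rwa [mul_one_div, div_self (ne_of_gt (h2a i))] at this
  have hmle : ∀ i, (m i : ℝ) ≤ 1 / α i := by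
    intro i
    rcases le_or_gt (2 * α i) 1 with h | h
    · have h0 : (0:ℝ) ≤ 1 / (2 * α i) := by have := h2a i; positivity
      have h2 : (m i : ℝ) < 1 / (2 * α i) + 1 := Nat.ceil_lt_add_one h0
      have h3 : (1:ℝ) ≤ 1 / (2 * α i) := by
        rw [le_div_iff₀ (h2a i)]; linarith
      have : (m i : ℝ) < 1 / (2 * α i) + 1 / (2 * α i) := by linarith
      have heq : 1 / (2 * α i) + 1 / (2 * α i) = 1 / α i := by
        field_simp; ring
      linarith [heq ▸ this]
    · have hle1 : 1 / (2 * α i) ≤ (1:ℝ) := by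
        rw [div_le_one (h2a i)]; linarith
      have : m i ≤ 1 := by
        rw [hm]; exact_mod_cast Nat.ceil_le.mpr (by exact_mod_cast hle1)
      have h1 : (m i : ℝ) ≤ 1 := by exact_mod_cast this
      have h2 : (1:ℝ) ≤ 1 / α i := by
        rw [le_div_iff₀ (hpos i)]; linarith [hle i]
      linarith
  refine ⟨(Fintype.piFinset fun i => Finset.range (m i)).image
    (fun k i => -(1:ℝ)/2 + α i * (2 * k i + 1)), ?_, ?_, ?_⟩
  · refine ⟨fun i => -(1:ℝ)/2 + α i, ?_⟩
    intro f hf i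
    simp only [Finset.mem_image] at hf
    obtain ⟨k, -, rfl⟩ := hf
    exact ⟨(k i : ℤ), by push_cast; ring⟩
  · have hcard : ((Fintype.piFinset fun i => Finset.range (m i)).image
        (fun k i => -(1:ℝ)/2 + α i * (2 * k i + 1))).card
        ≤ ∏ i, m i := by
      refine le_trans (Finset.card_image_le) ?_
      rw [Fintype.card_piFinset]
      simp
    have h1 : (((Fintype.piFinset fun i => Finset.range (m i)).image
        (fun k i => -(1:ℝ)/2 + α i * (2 * k i + 1))).card : ℝ)
        ≤ ∏ i, (m i : ℝ) := by exact_mod_cast hcard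
    have h2 : ∏ i, (m i : ℝ) ≤ ∏ i, 1 / α i := by
      refine Finset.prod_le_prod (fun i _ => by positivity) (fun i _ => hmle i)
    have h3 : ∏ i, (1:ℝ) / α i = (∏ i, α i)⁻¹ := by
      rw [← Finset.prod_inv_distrib]; simp [one_div]
    have hp0 : (0:ℝ) < κ ^ (-(n:ℝ)) := Real.rpow_pos_of_pos hκ0 _
    have h4 : (∏ i, α i)⁻¹ ≤ (κ ^ (-(n:ℝ)))⁻¹ :=
      inv_anti₀ hp0 hprod
    have h5 : (κ ^ (-(n:ℝ)))⁻¹ = κ ^ n := by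
      rw [Real.rpow_neg hκ0.le, Real.rpow_natCast, inv_inv]
    calc _ ≤ ∏ i, (m i : ℝ) := h1
      _ ≤ ∏ i, 1 / α i := h2
      _ = (∏ i, α i)⁻¹ := h3
      _ ≤ (κ ^ (-(n:ℝ)))⁻¹ := h4
      _ = κ ^ n := h5
  · intro y hy
    set k : Fin n → ℕ := fun i => min ⌊(y i + 1/2) / (2 * α i)⌋₊ (m i - 1) with hk
    refine ⟨fun i => -(1:ℝ)/2 + α i * (2 * k i + 1), ?_, ?_⟩
    · simp only [Finset.mem_image]
      refine ⟨k, ?_, rfl⟩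
      rw [Fintype.mem_piFinset]
      intro i
      rw [Finset.mem_range]
      exact lt_of_le_of_lt (min_le_right _ _)
        (Nat.sub_lt (hm1 i) one_pos)
    · intro i
      have ht0 : 0 ≤ y i + 1/2 := by
        have := abs_le.mp (hy i); linarith [this.1]
      have ht1 : y i + 1/2 ≤ 1 := by
        have := abs_le.mp (hy i); linarith [this.2]
      have hklej : k i ≤ ⌊(y i + 1/2) / (2 * α i)⌋₊ := min_le_left _ _
      have hlow : 2 * α i * k i ≤ y i + 1/2 := by
        have h1 : (⌊(y i + 1/2) / (2 * α i)⌋₊ : ℝ) ≤ (y i + 1/2) / (2 * α i) :=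
          Nat.floor_le (by have := h2a i; positivity)
        have h2 : (k i : ℝ) ≤ (y i + 1/2) / (2 * α i) :=
          le_trans (by exact_mod_cast hklej) h1
        calc 2 * α i * k i ≤ 2 * α i * ((y i + 1/2) / (2 * α i)) :=
              mul_le_mul_of_nonneg_left h2 (le_of_lt (h2a i))
          _ = y i + 1/2 := by rw [mul_comm]; exact div_mul_cancel₀ _ (ne_of_gt (h2a i))
      have hhigh : y i + 1/2 ≤ 2 * α i * (k i + 1) := by
        rcases le_or_gt ⌊(y i + 1/2) / (2 * α i)⌋₊ (m i - 1) with h | h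
        · have hkeq : k i = ⌊(y i + 1/2) / (2 * α i)⌋₊ := min_eq_left h
          have h1 : (y i + 1/2) / (2 * α i) < ⌊(y i + 1/2) / (2 * α i)⌋₊ + 1 :=
            Nat.lt_floor_add_one _
          have h2 : (y i + 1/2) / (2 * α i) < (k i : ℝ) + 1 := by
            rw [hkeq]; exact_mod_cast h1
          have := (div_lt_iff₀ (h2a i)).mp h2
          linarith
        · have hkeq : k i = m i - 1 := min_eq_right (le_of_lt h)
          have hmk : (k i : ℝ) + 1 = m i := by
            rw [hkeq]
            have : m i - 1 + 1 = m i := Nat.succ_pred_eq_of_pos (hm1 i)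
            exact_mod_cast congrArg (Nat.cast (R := ℝ)) this
          rw [hmk]
          linarith [hcov i]
      rw [abs_le]
      constructor <;> [nlinarith; nlinarith]
end

section
/- There exist absolute constants C₁, C₂ > 0 such that the following holds. Fix n, pick γ∈(1,√n), ε∈(0,1/(20γ)), κ>1, and α∈[0,1]^n with ∏_{i=1}^n α_i ≥ κ^{−n}. For any set S ⊂ S^{n−1} there exists a finite set 𝒩 ⊂ (5/4)B₂^n ∖ (3/4)B₂^n such that S ⊂ 𝒩 + (4εγ/√n)P_α and #𝒩 ≤ N(S, εB₂^n) · κ^n · (C₁γ)^{C₂ n/γ²}. -/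
/-!
Cover `S` by `N(S, εB₂ⁿ)` Euclidean `ε`-balls with centres `t ∈ T`. For `x` in the ball around `t`,
rounding each coordinate of `x - t` to the grid `δ α_i ℤ`, `δ = 4εγ/√n`, gives a point
`y = t + δ α m` with `|x_i - y_i| ≤ δ α_i / 2`, hence within `2εγ < 1/10` of the unit sphere.
Since `|δ α_i m_i| ≤ 2 |x_i - t_i|`, the integer vector `m` lies in the ellipsoid
`∑ (α_i m_i)² ≤ n / (4γ²)`. Its lattice points are counted by Rankin's trick: there are at most
`e^{λR²} ∏_i ∑_k e^{-λ α_i² k²}` of them, and each one-dimensional theta sum is at most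
`(1 + 4e^{-λ/25}) / α_i` (compare with the Gaussian integral when `α_i` is small, with a geometric
series otherwise). With `λ = 50 log (2γ)` and `∏ α_i ≥ κ⁻ⁿ` this is `κⁿ (2γ)^{15n/γ²}` per ball.
-/

open Real Finset

/-- Euclidean norm of a vector in `ℝ^m`. -/
noncomputable def euclNorm {m : ℕ} (v : Fin m → ℝ) : ℝ := Real.sqrt (∑ i, v i ^ 2)

/-- `coverNum S K` is the minimal number of translates of `K` needed to cover `S`. -/
noncomputable def coverNum {n : ℕ} (S K : Set (Fin n → ℝ)) : ℕ :=
  sInf {m : ℕ | ∃ T : Finset (Fin n → ℝ), T.card = m ∧ S ⊆ {y | ∃ t ∈ T, y - t ∈ K}}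

lemma euclNorm_eq_norm_toLp {n : ℕ} (v : Fin n → ℝ) : euclNorm v = ‖WithLp.toLp 2 v‖ := by
  simp [euclNorm, EuclideanSpace.norm_eq]

lemma abs_euclNorm_sub_euclNorm_le {n : ℕ} (x y : Fin n → ℝ) :
    |euclNorm x - euclNorm y| ≤ euclNorm (x - y) := by
  simpa only [euclNorm_eq_norm_toLp, WithLp.toLp_sub] using abs_norm_sub_norm_le _ _

lemma euclNorm_le_sqrt_mul {n : ℕ} {v : Fin n → ℝ} {c : ℝ} (hc : 0 ≤ c) (hv : ∀ i, |v i| ≤ c) :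
    euclNorm v ≤ √n * c := by
  have hsum : ∑ i, v i ^ 2 ≤ n * c ^ 2 := by
    calc ∑ i, v i ^ 2 ≤ ∑ _i : Fin n, c ^ 2 :=
          sum_le_sum fun i _ => sq_le_sq' (abs_le.1 (hv i)).1 (abs_le.1 (hv i)).2
      _ = n * c ^ 2 := by simp
  calc euclNorm v ≤ √(n * c ^ 2) := sqrt_le_sqrt hsum
    _ = √n * c := by rw [sqrt_mul n.cast_nonneg, sqrt_sq hc]

lemma exists_card_eq_coverNum {n : ℕ} {S : Set (Fin n → ℝ)} {r ε : ℝ}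
    (hS : ∀ x ∈ S, euclNorm x ≤ r) (hε : 0 < ε) :
    ∃ T : Finset (Fin n → ℝ), T.card = coverNum S {v | euclNorm v ≤ ε} ∧
      ∀ x ∈ S, ∃ t ∈ T, euclNorm (x - t) ≤ ε := by
  suffices h : {m : ℕ | ∃ T : Finset (Fin n → ℝ), T.card = m ∧
      S ⊆ {y | ∃ t ∈ T, y - t ∈ {v | euclNorm v ≤ ε}}}.Nonempty by
    obtain ⟨T, hT, hcover⟩ := Nat.sInf_mem h
    exact ⟨T, hT, fun x hx => hcover hx⟩
  obtain ⟨t, -, ht, hcover⟩ :=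
    finite_cover_balls_of_compact (isCompact_closedBall (0 : EuclideanSpace ℝ (Fin n)) r) hε
  refine ⟨_, ht.toFinset.image WithLp.ofLp, rfl, fun x hx => ?_⟩
  have hxr : WithLp.toLp 2 x ∈ Metric.closedBall 0 r := by
    simpa [← euclNorm_eq_norm_toLp] using hS x hx
  obtain ⟨y, hy, hxy⟩ := Set.mem_iUnion₂.1 (hcover hxr)
  refine ⟨y.ofLp, mem_image_of_mem _ (ht.mem_toFinset.2 hy), ?_⟩
  change euclNorm _ ≤ ε
  rw [euclNorm_eq_norm_toLp, WithLp.toLp_sub, WithLp.toLp_ofLp, ← dist_eq_norm]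
  exact (Metric.mem_ball.1 hxy).le

lemma abs_round_le_two_mul_abs {K : Type*} [Field K] [LinearOrder K] [IsStrictOrderedRing K]
    [FloorRing K] (x : K) : |(round x : K)| ≤ 2 * |x| := by
  by_cases h : round x = 0
  · simp [h]
  have hx : 1 / 2 ≤ |x| := by
    rw [round_eq_zero_iff, Set.mem_Ico, not_and_or, not_le, not_lt] at h
    rcases h with h | h
    · rw [abs_of_neg (by linarith)]; linarith
    · rw [abs_of_pos (by linarith)]; exact h
  have hround := abs_sub_round x
  have := abs_sub_abs_le_abs_sub (round x : K) x
  rw [abs_sub_comm] at this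
  linarith

lemma exists_int_mul_near {u h : ℝ} (hh : 0 < h) :
    ∃ m : ℤ, |u - h * m| ≤ h / 2 ∧ |h * m| ≤ 2 * |u| := by
  refine ⟨round (u / h), ?_, ?_⟩
  · calc |u - h * round (u / h)| = |h * (u / h - round (u / h))| := by
          rw [mul_sub, mul_div_cancel₀ _ hh.ne']
      _ = h * |u / h - round (u / h)| := by rw [abs_mul, abs_of_pos hh]
      _ ≤ h * (1 / 2) := by gcongr; exact abs_sub_round _
      _ = h / 2 := by ring
  · calc |h * round (u / h)| = h * |(round (u / h) : ℝ)| := by rw [abs_mul, abs_of_pos hh]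
      _ ≤ h * (2 * |u / h|) := by gcongr; exact abs_round_le_two_mul_abs _
      _ = 2 * |u| := by rw [abs_div, abs_of_pos hh]; field_simp

lemma sum_range_exp_neg_mul_sq_le_sqrt {s : ℝ} (hs : 0 < s) (N : ℕ) :
    ∑ j ∈ range N, exp (-s * ((j : ℝ) + 1) ^ 2) ≤ √(π / s) / 2 := by
  set f : ℝ → ℝ := fun x => exp (-s * x ^ 2)
  have hf : MeasureTheory.Integrable f := integrable_exp_neg_mul_sq hs
  have hanti : AntitoneOn f (Set.Icc 0 (0 + N)) := by
    intro x hx y _ hxy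
    have hsq : x ^ 2 ≤ y ^ 2 := pow_le_pow_left₀ hx.1 hxy 2
    simp only [f, exp_le_exp]
    nlinarith
  calc ∑ j ∈ range N, exp (-s * ((j : ℝ) + 1) ^ 2) = ∑ j ∈ range N, f (0 + ↑(j + 1)) := by
        simp [f]
    _ ≤ ∫ x in (0 : ℝ)..0 + N, f x := hanti.sum_le_integral
    _ ≤ ∫ x in Set.Ioi 0, f x := by
        rw [zero_add, intervalIntegral.integral_of_le N.cast_nonneg]
        exact MeasureTheory.setIntegral_mono_set hf.integrableOn
          (.of_forall fun x => (exp_pos _).le) (.of_forall fun x hx => hx.1)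
    _ = √(π / s) / 2 := integral_gaussian_Ioi s

lemma sum_range_exp_neg_mul_sq_le_two_mul_exp {s : ℝ} (hs : 1 ≤ s) (N : ℕ) :
    ∑ j ∈ range N, exp (-s * ((j : ℝ) + 1) ^ 2) ≤ 2 * exp (-s) := by
  have hr : exp (-s) ≤ 1 / 2 := by
    rw [exp_neg, inv_le_comm₀ (exp_pos s) (by norm_num)]
    linarith [add_one_le_exp s]
  calc ∑ j ∈ range N, exp (-s * ((j : ℝ) + 1) ^ 2)
      ≤ ∑ j ∈ range N, exp (-s) * exp (-s) ^ j := by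
        refine sum_le_sum fun j _ => ?_
        rw [← exp_nat_mul, ← exp_add, exp_le_exp]
        nlinarith [sq_nonneg (j : ℝ), (j.cast_nonneg : (0 : ℝ) ≤ j)]
    _ = exp (-s) * ∑ j ∈ range N, exp (-s) ^ j := (mul_sum ..).symm
    _ ≤ exp (-s) * (1 - exp (-s))⁻¹ := by
        gcongr
        have h := geom_sum_Ico_le_of_lt_one (m := 0) (n := N) (exp_pos (-s)).le (by linarith)
        rwa [← Finset.range_eq_Ico, pow_zero, one_div] at h
    _ ≤ exp (-s) * 2 := by
        gcongr
        rw [inv_le_comm₀ (by linarith) two_pos]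
        linarith
    _ = 2 * exp (-s) := mul_comm _ _

lemma sum_Icc_exp_neg_mul_sq_eq (s : ℝ) (B : ℕ) :
    ∑ k ∈ Icc (-B : ℤ) B, exp (-s * (k : ℝ) ^ 2) =
      1 + 2 * ∑ j ∈ range B, exp (-s * ((j : ℝ) + 1) ^ 2) := by
  rw [sum_Icc_of_even_eq_range (fun k => by simp), sum_range_succ']
  push_cast
  simp only [zero_pow two_ne_zero, mul_zero, exp_zero, nsmul_eq_mul]
  ring

theorem sum_Icc_exp_neg_mul_sq_le {l a : ℝ} (hl : 25 ≤ l) (ha0 : 0 < a) (ha1 : a ≤ 1)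
    (B : ℕ) :
    ∑ k ∈ Icc (-B : ℤ) B, exp (-l * (a * k) ^ 2) ≤ (1 + 4 * exp (-l / 25)) / a := by
  have hs : 0 < l * a ^ 2 := by positivity
  simp_rw [show ∀ k : ℝ, -l * (a * k) ^ 2 = -(l * a ^ 2) * k ^ 2 from fun k => by ring]
  rw [sum_Icc_exp_neg_mul_sq_eq]
  rcases le_or_gt a (1 / 5) with ha | ha
  · have hsqrt : √(π / (l * a ^ 2)) ≤ 4 / 5 / a := by
      rw [sqrt_le_left (by positivity), div_le_iff₀ hs]
      field_simp
      nlinarith [pi_lt_d2]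
    calc 1 + 2 * ∑ j ∈ range B, exp (-(l * a ^ 2) * ((j : ℝ) + 1) ^ 2)
        ≤ 1 + 4 / 5 / a := by linarith [sum_range_exp_neg_mul_sq_le_sqrt hs B]
      _ = (a + 4 / 5) / a := by field_simp
      _ ≤ 1 / a := by gcongr; linarith
      _ ≤ (1 + 4 * exp (-l / 25)) / a := by gcongr; linarith [exp_pos (-l / 25)]
  · have hls : l / 25 ≤ l * a ^ 2 :=
      calc l / 25 = l * (1 / 5) ^ 2 := by ring
        _ ≤ l * a ^ 2 := by gcongr
    calc 1 + 2 * ∑ j ∈ range B, exp (-(l * a ^ 2) * ((j : ℝ) + 1) ^ 2)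
        ≤ 1 + 4 * exp (-(l * a ^ 2)) := by
          linarith [sum_range_exp_neg_mul_sq_le_two_mul_exp (by linarith : 1 ≤ l * a ^ 2) B]
      _ ≤ 1 + 4 * exp (-l / 25) := by gcongr; linarith
      _ ≤ (1 + 4 * exp (-l / 25)) / a := le_div_self (by positivity) ha0 ha1

lemma card_filter_sum_sq_le_exp_mul_prod {n : ℕ} (α : Fin n → ℝ) (s : Fin n → Finset ℤ)
    {l : ℝ} (hl : 0 ≤ l) (R : ℝ) :
    (#{m ∈ Fintype.piFinset s | ∑ i, (α i * m i) ^ 2 ≤ R ^ 2} : ℝ) ≤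
      exp (l * R ^ 2) * ∏ i, ∑ k ∈ s i, exp (-l * (α i * k) ^ 2) := by
  rw [prod_univ_sum, mul_sum, card_eq_sum_ones, Nat.cast_sum, Nat.cast_one]
  have hterm : ∀ m : Fin n → ℤ, exp (l * R ^ 2) * ∏ i, exp (-l * (α i * m i) ^ 2) =
      exp (l * (R ^ 2 - ∑ i, (α i * m i) ^ 2)) := by
    intro m
    rw [← exp_sum, ← exp_add, mul_sub, mul_sum]
    simp only [neg_mul, sum_neg_distrib, sub_eq_add_neg]
  calc ∑ m ∈ Fintype.piFinset s with ∑ i, (α i * m i) ^ 2 ≤ R ^ 2, (1 : ℝ)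
      ≤ ∑ m ∈ Fintype.piFinset s with ∑ i, (α i * m i) ^ 2 ≤ R ^ 2,
          exp (l * R ^ 2) * ∏ i, exp (-l * (α i * m i) ^ 2) := by
        refine sum_le_sum fun m hm => ?_
        rw [hterm, one_le_exp_iff]
        exact mul_nonneg hl (sub_nonneg.2 (mem_filter.1 hm).2)
    _ ≤ ∑ m ∈ Fintype.piFinset s, exp (l * R ^ 2) * ∏ i, exp (-l * (α i * m i) ^ 2) :=
        sum_le_sum_of_subset_of_nonneg (filter_subset _ _) fun _ _ _ => by positivity

-- The box only makes the set finite: by `mem_ellipsoidLatticePoints` it cuts off no point of the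
-- ellipsoid when `α > 0` and `R ≥ 0`.
noncomputable def ellipsoidLatticePoints {n : ℕ} (α : Fin n → ℝ) (R : ℝ) :
    Finset (Fin n → ℤ) :=
  {m ∈ Fintype.piFinset fun i => Icc (-⌈R / α i⌉₊ : ℤ) ⌈R / α i⌉₊ | ∑ i, (α i * m i) ^ 2 ≤ R ^ 2}

lemma mem_ellipsoidLatticePoints {n : ℕ} {α : Fin n → ℝ} {R : ℝ} (hα : ∀ i, 0 < α i)
    (hR : 0 ≤ R) {m : Fin n → ℤ} (hm : ∑ i, (α i * m i) ^ 2 ≤ R ^ 2) :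
    m ∈ ellipsoidLatticePoints α R := by
  refine mem_filter.2 ⟨Fintype.mem_piFinset.2 fun i => ?_, hm⟩
  have hsq : (α i * m i) ^ 2 ≤ R ^ 2 :=
    (single_le_sum (fun j _ => sq_nonneg (α j * m j)) (mem_univ i)).trans hm
  have hmi : |(m i : ℝ)| ≤ ⌈R / α i⌉₊ := by
    refine le_trans ?_ (Nat.le_ceil _)
    rw [le_div_iff₀ (hα i), mul_comm, ← abs_of_pos (hα i), ← abs_mul]
    exact abs_le_of_sq_le_sq hsq hR
  rw [mem_Icc, ← abs_le]
  exact_mod_cast hmi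

theorem card_ellipsoidLatticePoints_le {n : ℕ} {α : Fin n → ℝ} (hα0 : ∀ i, 0 < α i)
    (hα1 : ∀ i, α i ≤ 1) {l : ℝ} (hl : 25 ≤ l) (R : ℝ) :
    (#(ellipsoidLatticePoints α R) : ℝ) ≤
      exp (l * R ^ 2) * (1 + 4 * exp (-l / 25)) ^ n / ∏ i, α i := by
  calc (#(ellipsoidLatticePoints α R) : ℝ)
      ≤ exp (l * R ^ 2) * ∏ i, ∑ k ∈ Icc (-⌈R / α i⌉₊ : ℤ) ⌈R / α i⌉₊,
          exp (-l * (α i * k) ^ 2) :=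
        card_filter_sum_sq_le_exp_mul_prod α _ (by linarith) R
    _ ≤ exp (l * R ^ 2) * ∏ i, (1 + 4 * exp (-l / 25)) / α i := by
        gcongr with i
        exact sum_Icc_exp_neg_mul_sq_le hl (hα0 i) (hα1 i) _
    _ = exp (l * R ^ 2) * (1 + 4 * exp (-l / 25)) ^ n / ∏ i, α i := by
        rw [prod_div_distrib, prod_const, card_univ, Fintype.card_fin, mul_div_assoc]

theorem card_ellipsoidLatticePoints_le_rpow {n : ℕ} {α : Fin n → ℝ} (hα0 : ∀ i, 0 < α i)
    (hα1 : ∀ i, α i ≤ 1) {γ : ℝ} (hγ : 1 < γ) :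
    (#(ellipsoidLatticePoints α (√n / (2 * γ))) : ℝ) ≤
      (∏ i, α i)⁻¹ * (2 * γ) ^ (15 * n / γ ^ 2) := by
  set L := log (2 * γ)
  set R := √n / (2 * γ)
  have hL : 1 / 2 ≤ L := by
    have := log_two_gt_d9
    have := log_le_log two_pos (by linarith : (2 : ℝ) ≤ 2 * γ)
    linarith
  have hα : 0 < ∏ i, α i := prod_pos fun i _ => hα0 i
  -- with `l = 50 L` the per-coordinate excess `4 exp (-l / 25)` is exactly `1 / γ²`
  have hexcess : 4 * exp (-(50 * L) / 25) = 1 / γ ^ 2 := by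
    rw [show -(50 * L) / 25 = -((2 : ℕ) * L) by push_cast; ring, exp_neg, exp_nat_mul,
      exp_log (by linarith)]
    field_simp
    ring
  have hgrowth : (1 + 1 / γ ^ 2) ^ n ≤ exp (n / γ ^ 2) := by
    calc (1 + 1 / γ ^ 2) ^ n ≤ exp (1 / γ ^ 2) ^ n := by
          gcongr; linarith [add_one_le_exp (1 / γ ^ 2)]
      _ = exp (n / γ ^ 2) := by rw [← exp_nat_mul, mul_one_div]
  have hexponent : 50 * L * R ^ 2 + n / γ ^ 2 ≤ L * (15 * n / γ ^ 2) := by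
    have ht : 0 ≤ (n : ℝ) / γ ^ 2 := by positivity
    have hR : R ^ 2 = n / (4 * γ ^ 2) := by rw [div_pow, sq_sqrt n.cast_nonneg]; ring
    rw [hR, show 50 * L * (n / (4 * γ ^ 2)) + n / γ ^ 2 = (25 / 2 * L + 1) * (n / γ ^ 2) by ring,
      show L * (15 * n / γ ^ 2) = 15 * L * (n / γ ^ 2) by ring]
    gcongr
    linarith
  calc (#(ellipsoidLatticePoints α R) : ℝ)
      ≤ exp (50 * L * R ^ 2) * (1 + 4 * exp (-(50 * L) / 25)) ^ n / ∏ i, α i :=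
        card_ellipsoidLatticePoints_le hα0 hα1 (by linarith) R
    _ ≤ exp (50 * L * R ^ 2) * exp (n / γ ^ 2) / ∏ i, α i := by rw [hexcess]; gcongr
    _ = (∏ i, α i)⁻¹ * exp (50 * L * R ^ 2 + n / γ ^ 2) := by rw [exp_add]; ring
    _ ≤ (∏ i, α i)⁻¹ * exp (L * (15 * n / γ ^ 2)) := by gcongr
    _ = (∏ i, α i)⁻¹ * (2 * γ) ^ (15 * n / γ ^ 2) := by rw [rpow_def_of_pos (by linarith)]

lemma exists_mem_ellipsoidLatticePoints_near {n : ℕ} {α : Fin n → ℝ} (hα : ∀ i, 0 < α i)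
    {δ ε : ℝ} (hδ : 0 < δ) (hε : 0 ≤ ε) {x t : Fin n → ℝ} (hxt : euclNorm (x - t) ≤ ε) :
    ∃ m ∈ ellipsoidLatticePoints α (2 * ε / δ),
      ∀ i, |x i - (t i + δ * α i * m i)| ≤ δ * α i / 2 := by
  choose m hm using fun i => exists_int_mul_near (u := x i - t i) (mul_pos hδ (hα i))
  refine ⟨m, mem_ellipsoidLatticePoints hα (by positivity) ?_, fun i => by
    simpa only [sub_sub] using (hm i).1⟩
  have hxt2 : ∑ i, (x i - t i) ^ 2 ≤ ε ^ 2 := (sqrt_le_left hε).1 hxt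
  have hscaled : δ ^ 2 * ∑ i, (α i * m i) ^ 2 ≤ (2 * ε) ^ 2 :=
    calc δ ^ 2 * ∑ i, (α i * m i) ^ 2 = ∑ i, (δ * α i * m i) ^ 2 := by
          rw [mul_sum]; congr! 1 with i; ring
      _ ≤ ∑ i, (2 * (x i - t i)) ^ 2 := by
          refine sum_le_sum fun i _ => ?_
          rw [sq_le_sq, abs_mul 2, abs_two]
          exact (hm i).2
      _ ≤ (2 * ε) ^ 2 := by
          simp_rw [mul_pow]
          rw [← mul_sum]
          gcongr
  rw [div_pow, le_div_iff₀ (by positivity), mul_comm]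
  exact hscaled

noncomputable def gridNet {n : ℕ} (T : Finset (Fin n → ℝ)) (δ : ℝ) (α : Fin n → ℝ) (R : ℝ) :
    Finset (Fin n → ℝ) :=
  (T ×ˢ ellipsoidLatticePoints α R).image fun p i => p.1 i + δ * α i * p.2 i

lemma card_gridNet_le {n : ℕ} (T : Finset (Fin n → ℝ)) (δ : ℝ) (α : Fin n → ℝ) (R : ℝ) :
    #(gridNet T δ α R) ≤ #T * #(ellipsoidLatticePoints α R) :=
  card_image_le.trans (card_product _ _).le

lemma exists_mem_gridNet_near {n : ℕ} {α : Fin n → ℝ} (hα : ∀ i, 0 < α i) {δ ε : ℝ}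
    (hδ : 0 < δ) (hε : 0 ≤ ε) {T : Finset (Fin n → ℝ)} {x t : Fin n → ℝ} (ht : t ∈ T)
    (hxt : euclNorm (x - t) ≤ ε) :
    ∃ y ∈ gridNet T δ α (2 * ε / δ), ∀ i, |x i - y i| ≤ δ * α i / 2 := by
  obtain ⟨m, hm, hnear⟩ := exists_mem_ellipsoidLatticePoints_near hα hδ hε hxt
  exact ⟨_, mem_image.2 ⟨(t, m), mem_product.2 ⟨ht, hm⟩, rfl⟩, hnear⟩

lemma euclNorm_mem_Ioc_of_abs_sub_le {n : ℕ} {x y : Fin n → ℝ} (hx : euclNorm x = 1) {c : ℝ}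
    (hc : 0 ≤ c) (hxy : ∀ i, |x i - y i| ≤ c) (hsmall : √n * c < 1 / 4) :
    3 / 4 < euclNorm y ∧ euclNorm y ≤ 5 / 4 := by
  have hdist := abs_le.1 (abs_euclNorm_sub_euclNorm_le x y)
  have hnear : euclNorm (x - y) ≤ √n * c := euclNorm_le_sqrt_mul hc hxy
  constructor <;> linarith [hdist.1, hdist.2]

theorem covering_final_proposition :
    ∃ C₁ C₂ : ℝ, 0 < C₁ ∧ 0 < C₂ ∧
    ∀ (n : ℕ) (γ ε κ : ℝ) (α : Fin n → ℝ) (S : Set (Fin n → ℝ)),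
      1 < γ → γ < Real.sqrt n → 0 < ε → ε < 1 / (20 * γ) → 1 < κ →
      (∀ i, 0 ≤ α i) → (∀ i, α i ≤ 1) → κ ^ (-(n : ℝ)) ≤ ∏ i, α i →
      (∀ x ∈ S, euclNorm x = 1) →
      ∃ 𝒩 : Finset (Fin n → ℝ),
        -- `𝒩 ⊆ (5/4)B₂ⁿ \ (3/4)B₂ⁿ`
        (∀ y ∈ 𝒩, 3 / 4 < euclNorm y ∧ euclNorm y ≤ 5 / 4) ∧
        -- `S ⊆ 𝒩 + (4εγ/√n)P_α`
        (∀ x ∈ S, ∃ y ∈ 𝒩, ∀ i, |x i - y i| ≤ (4 * ε * γ / Real.sqrt n) * α i) ∧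
        (𝒩.card : ℝ) ≤ (coverNum S {v | euclNorm v ≤ ε} : ℝ) * κ ^ n *
          (C₁ * γ) ^ (C₂ * n / γ ^ 2) := by
  refine ⟨2, 15, two_pos, by norm_num, ?_⟩
  intro n γ ε κ α S hγ hγn hε hεγ hκ hα0 hα1 hprod hS
  have hn : 0 < √n := by linarith
  have hκn : 0 < κ ^ n := by positivity
  rw [rpow_neg (by linarith), rpow_natCast] at hprod
  have hα : ∀ i, 0 < α i := fun i => (hα0 i).lt_of_ne fun h => by
    linarith [prod_eq_zero (mem_univ i) h.symm, inv_pos.2 hκn]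
  obtain ⟨T, hT, hcover⟩ := exists_card_eq_coverNum (fun x hx => (hS x hx).le) hε
  set δ := 4 * ε * γ / √n
  have hδ : 0 < δ := by positivity
  have hsmall : √n * (δ / 2) < 1 / 4 := by
    rw [lt_div_iff₀ (by positivity)] at hεγ
    rw [show √n * (δ / 2) = 2 * ε * γ by simp only [δ]; field_simp; norm_num]
    linarith
  have hR : 2 * ε / δ = √n / (2 * γ) := by simp only [δ]; field_simp; ring
  let 𝒩 := {y ∈ gridNet T δ α (2 * ε / δ) | 3 / 4 < euclNorm y ∧ euclNorm y ≤ 5 / 4}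
  refine ⟨𝒩, fun y hy => (mem_filter.1 hy).2, fun x hx => ?_, ?_⟩
  · obtain ⟨t, ht, hxt⟩ := hcover x hx
    obtain ⟨y, hy, hclose⟩ := exists_mem_gridNet_near hα hδ hε.le ht hxt
    have hclose' : ∀ i, |x i - y i| ≤ δ / 2 := fun i =>
      (hclose i).trans (by gcongr; exact mul_le_of_le_one_right hδ.le (hα1 i))
    refine ⟨y, mem_filter.2 ⟨hy, euclNorm_mem_Ioc_of_abs_sub_le (hS x hx) (half_pos hδ).le
      hclose' hsmall⟩, fun i => (hclose i).trans (by linarith [mul_pos hδ (hα i)])⟩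
  · calc (#𝒩 : ℝ) ≤ #T * #(ellipsoidLatticePoints α (√n / (2 * γ))) := by
          rw [← hR]; exact_mod_cast (card_filter_le _ _).trans (card_gridNet_le _ _ _ _)
      _ ≤ coverNum S {v | euclNorm v ≤ ε} * ((∏ i, α i)⁻¹ * (2 * γ) ^ (15 * n / γ ^ 2)) := by
          rw [hT]
          gcongr
          exact card_ellipsoidLatticePoints_le_rpow hα hα1 hγ
      _ ≤ coverNum S {v | euclNorm v ≤ ε} * κ ^ n * (2 * γ) ^ (15 * n / γ ^ 2) := by
          rw [mul_assoc]
          gcongr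
          exact inv_le_of_inv_le₀ hκn hprod
end

section
/- Fix N∈ℕ, δ,ρ∈(0,1/2), c∈(0,1) and α>0, and suppose C̃>0 is a constant such that LCD_{α,c}(x) ≥ C̃√N for every x∈Incomp(δ,ρ) ⊂ S^{N−1}. Assume α ≤ (c C̃/16)√N. For D>0 let S_D := {x∈Incomp(δ,ρ) : D ≤ LCD_{α,c}(x) ≤ 2D}. Then for every y ∈ S_D + (α/(2D√N))B_∞^N one has LCD_{α/2, c/4}(y) ≥ D. -/
open scoped ENNReal

/-- Euclidean distance from `v` to the integer lattice `ℤ^N`. -/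
noncomputable def latticeDist {N : ℕ} (v : Fin N → ℝ) : ℝ :=
  ⨅ z : Fin N → ℤ, euclNorm (fun i => v i - (z i : ℝ))

/-- The essential least common denominator `LCD_{α,c}(v)` (`∞` if no admissible `θ` exists). -/
noncomputable def LCD {N : ℕ} (α c : ℝ) (v : Fin N → ℝ) : ℝ≥0∞ :=
  sInf {θ : ℝ≥0∞ | ∃ t : ℝ, 0 < t ∧ θ = ENNReal.ofReal t ∧
    latticeDist (t • v) < min (c * euclNorm (t • v)) α}

/-- Vectors with at most `k` nonzero coordinates. -/
def sparseSet (N : ℕ) (k : ℝ) : Set (Fin N → ℝ) :=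
  {x | ∃ T : Finset (Fin N), (∀ i ∉ T, x i = 0) ∧ (T.card : ℝ) ≤ k}

/-- Compressible unit vectors. -/
def compSet (N : ℕ) (δ ρ : ℝ) : Set (Fin N → ℝ) :=
  {x | euclNorm x = 1 ∧ ∃ y ∈ sparseSet N (δ * N), euclNorm (x - y) ≤ ρ}

/-- Incompressible unit vectors. -/
def incompSet (N : ℕ) (δ ρ : ℝ) : Set (Fin N → ℝ) :=
  {x | euclNorm x = 1 ∧ x ∉ compSet N δ ρ}


namespace LcdAux

lemma euclNorm_eq_norm {N : ℕ} (v : Fin N → ℝ) :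
    euclNorm v = ‖((WithLp.equiv 2 (Fin N → ℝ)).symm v : EuclideanSpace ℝ (Fin N))‖ := by
  simp [euclNorm, EuclideanSpace.norm_eq, Real.norm_eq_abs, sq_abs]

lemma euclNorm_nonneg {N : ℕ} (v : Fin N → ℝ) : 0 ≤ euclNorm v := Real.sqrt_nonneg _

lemma euclNorm_add_le {N : ℕ} (a b : Fin N → ℝ) :
    euclNorm (a + b) ≤ euclNorm a + euclNorm b := by
  simp only [euclNorm_eq_norm]
  rw [show (WithLp.equiv 2 (Fin N → ℝ)).symm (a + b)
      = (WithLp.equiv 2 (Fin N → ℝ)).symm a + (WithLp.equiv 2 (Fin N → ℝ)).symm b from rfl]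
  exact norm_add_le _ _

lemma euclNorm_smul {N : ℕ} (t : ℝ) (v : Fin N → ℝ) :
    euclNorm (t • v) = |t| * euclNorm v := by
  simp only [euclNorm_eq_norm]
  rw [show (WithLp.equiv 2 (Fin N → ℝ)).symm (t • v)
      = t • (WithLp.equiv 2 (Fin N → ℝ)).symm v from rfl]
  rw [norm_smul, Real.norm_eq_abs]

lemma euclNorm_sub_comm {N : ℕ} (a b : Fin N → ℝ) :
    euclNorm (a - b) = euclNorm (b - a) := by
  unfold euclNorm
  congr 1
  exact Finset.sum_congr rfl fun i _ => by simp [Pi.sub_apply]; ring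

lemma euclNorm_le_sqrt_mul {N : ℕ} (v : Fin N → ℝ) (b : ℝ) (hb : 0 ≤ b)
    (h : ∀ i, |v i| ≤ b) : euclNorm v ≤ Real.sqrt N * b := by
  have h1 : (∑ i, v i ^ 2) ≤ ∑ _i : Fin N, b ^ 2 := by
    apply Finset.sum_le_sum
    intro i _
    have := h i
    nlinarith [abs_nonneg (v i), sq_abs (v i)]
  have h2 : euclNorm v ≤ Real.sqrt (N * b ^ 2) := by
    apply Real.sqrt_le_sqrt
    simpa using h1
  calc euclNorm v ≤ Real.sqrt (N * b ^ 2) := h2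
    _ = Real.sqrt N * b := by
        rw [Real.sqrt_mul (Nat.cast_nonneg N), Real.sqrt_sq hb]

lemma latticeDist_le {N : ℕ} (u w : Fin N → ℝ) :
    latticeDist u ≤ latticeDist w + euclNorm (u - w) := by
  have key : ∀ z : Fin N → ℤ,
      latticeDist u - euclNorm (u - w) ≤ euclNorm (fun i => w i - (z i : ℝ)) := by
    intro z
    have h1 : latticeDist u ≤ euclNorm (fun i => u i - (z i : ℝ)) := by
      refine ciInf_le ⟨0, ?_⟩ z
      rintro r ⟨z', rfl⟩
      exact euclNorm_nonneg _
    have heq : (fun i => u i - (z i : ℝ)) = (fun i => w i - (z i : ℝ)) + (u - w) := by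
      funext i
      simp only [Pi.add_apply, Pi.sub_apply]
      ring
    have h2 : euclNorm (fun i => u i - (z i : ℝ))
        ≤ euclNorm (fun i => w i - (z i : ℝ)) + euclNorm (u - w) := by
      rw [heq]; exact euclNorm_add_le _ _
    linarith
  have h : latticeDist u - euclNorm (u - w) ≤ latticeDist w := le_ciInf key
  linarith

end LcdAux

/-- stability of the LCD on level sets (`lcd-comp`). -/
theorem lcd_level_set_stability
    (N : ℕ) (δ ρ c α Ctil : ℝ)
    (hδ : δ ∈ Set.Ioo (0:ℝ) (1/2)) (hρ : ρ ∈ Set.Ioo (0:ℝ) (1/2))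
    (hc : c ∈ Set.Ioo (0:ℝ) 1) (hα : 0 < α) (hCtil : 0 < Ctil)
    (hLCD : ∀ x ∈ incompSet N δ ρ,
      ENNReal.ofReal (Ctil * Real.sqrt N) ≤ LCD α c x)
    (hα' : α ≤ (c * Ctil / 16) * Real.sqrt N) :
    ∀ D : ℝ, 0 < D →
    ∀ y : Fin N → ℝ,
      -- `y ∈ S_D + (α/(2D√N)) B_∞^N`
      (∃ x ∈ incompSet N δ ρ,
        ENNReal.ofReal D ≤ LCD α c x ∧ LCD α c x ≤ ENNReal.ofReal (2 * D) ∧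
        ∀ i, |y i - x i| ≤ α / (2 * D * Real.sqrt N)) →
      ENNReal.ofReal D ≤ LCD (α / 2) (c / 4) y := by
  intro D hD y hyp
  obtain ⟨x, hxI, hDle, hDub, hclose⟩ := hyp
  have hsN : 0 < Real.sqrt N := by
    nlinarith [Real.sqrt_nonneg (N : ℝ), mul_pos hc.1 hCtil]
  have hxnorm : euclNorm x = 1 := hxI.1
  have hCN : Ctil * Real.sqrt N ≤ 2 * D := by
    have h1 := (hLCD x hxI).trans hDub
    exact (ENNReal.ofReal_le_ofReal_iff (by positivity)).mp h1
  have hαcD : α ≤ c * D / 8 := by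
    nlinarith [mul_le_mul_of_nonneg_left hCN hc.1.le]
  have hq : α / (2 * D) ≤ c / 16 := by
    rw [div_le_iff₀ (by positivity)]
    nlinarith
  have hq0 : 0 ≤ α / (2 * D) := by positivity
  refine le_sInf ?_
  rintro θ ⟨t, ht, rfl, hdist⟩
  rw [ENNReal.ofReal_le_ofReal_iff ht.le]
  by_contra hDt
  push_neg at hDt
  -- closeness of x and y
  have hyx : euclNorm (x - y) ≤ α / (2 * D) := by
    have h1 : euclNorm (x - y) ≤ Real.sqrt N * (α / (2 * D * Real.sqrt N)) := by
      refine LcdAux.euclNorm_le_sqrt_mul _ _ (by positivity) ?_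
      intro i
      have : |(x - y) i| = |y i - x i| := by
        rw [Pi.sub_apply, abs_sub_comm]
      rw [this]
      exact hclose i
    have h2 : Real.sqrt N * (α / (2 * D * Real.sqrt N)) = α / (2 * D) := by
      field_simp
    linarith
  have hynorm : euclNorm y ≤ 1 + α / (2 * D) := by
    have h1 : euclNorm y ≤ euclNorm x + euclNorm (y - x) := by
      have h := LcdAux.euclNorm_add_le x (y - x)
      have heq : x + (y - x) = y := by abel
      rwa [heq] at h
    have h2 : euclNorm (y - x) = euclNorm (x - y) := LcdAux.euclNorm_sub_comm _ _
    linarith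
  -- lattice distance transfer
  have hld : latticeDist (t • x) ≤ latticeDist (t • y) + t * (α / (2 * D)) := by
    have h1 := LcdAux.latticeDist_le (t • x) (t • y)
    have h2 : euclNorm (t • x - t • y) = t * euclNorm (x - y) := by
      rw [← smul_sub, LcdAux.euclNorm_smul, abs_of_pos ht]
    nlinarith [LcdAux.euclNorm_nonneg (x - y)]
  have htyx : euclNorm (t • y) = t * euclNorm y := by
    rw [LcdAux.euclNorm_smul, abs_of_pos ht]
  have htxx : euclNorm (t • x) = t := by
    rw [LcdAux.euclNorm_smul, abs_of_pos ht, hxnorm, mul_one]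
  have hL : latticeDist (t • y) < c / 4 * (t * euclNorm y) := by
    have := hdist.trans_le (min_le_left _ _)
    rwa [htyx] at this
  have hB : latticeDist (t • y) < α / 2 := hdist.trans_le (min_le_right _ _)
  have hA : latticeDist (t • x) < c * euclNorm (t • x) := by
    rw [htxx]
    have hyn0 := LcdAux.euclNorm_nonneg y
    have hc4 : (0:ℝ) ≤ c / 4 := by linarith [hc.1.le]
    have h5 : t * euclNorm y ≤ t * (1 + α / (2 * D)) :=
      mul_le_mul_of_nonneg_left hynorm ht.le
    have h6 : c / 4 * (t * euclNorm y) ≤ c / 4 * (t * (1 + α / (2 * D))) :=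
      mul_le_mul_of_nonneg_left h5 hc4
    have h7 : t * (α / (2 * D)) ≤ t * (c / 16) :=
      mul_le_mul_of_nonneg_left hq ht.le
    have h8 : c / 4 * (t * (α / (2 * D))) ≤ c / 4 * (t * (c / 16)) :=
      mul_le_mul_of_nonneg_left h7 hc4
    nlinarith [mul_pos hc.1 ht, mul_le_mul_of_nonneg_right hc.2.le (mul_pos hc.1 ht).le]
  have hα2 : latticeDist (t • x) < α := by
    have hmul : t * (α / (2 * D)) ≤ D * (α / (2 * D)) :=
      mul_le_mul_of_nonneg_right hDt.le hq0
    have hDq : D * (α / (2 * D)) = α / 2 := by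
      field_simp
    linarith
  have hfinal : latticeDist (t • x) < min (c * euclNorm (t • x)) α := lt_min hA hα2
  have hle' : LCD α c x ≤ ENNReal.ofReal t := sInf_le ⟨t, ht, rfl, hfinal⟩
  have hDt' : D ≤ t := (ENNReal.ofReal_le_ofReal_iff ht.le).mp (hDle.trans hle')
  linarith
end

section
/- Let d ≥ 2 and N ≥ 1 be integers, let κ > 1, and let c₁ > 0. There exists a constant c₂ > 0 depending only on c₁ such that the following holds. Let W be an N×d random matrix whose columns are independent random vectors, and let z∈ℝ^d satisfy 1/2 ≤ |z| ≤ 3/2 and |z_k| ≥ c₁/√d for every coordinate k∈{1,…,d}. Then for every 0 < a < b, P( |Wz| < a and B_{κ²}(W) > b ) ≤ 2·P( B_κ(W) ≥ b/2 ) · sup_{x∈ℝ^d, 1/2≤|x|≤3/2, w∈ℝ^N} P( |Wx − w| < c₂ a ). -/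
/-!
Choose a split `J ⊔ Jᶜ` of the coordinates on which `z` has mass `m = min (1/12) (c₁²/2)` on
both sides; the lower bound `|z_k| ≥ c₁/√d` is what makes this possible. Since
`(κ²)^{-d} = κ^{-d} κ^{-d}`, gluing almost optimal coefficients on `J` and on `Jᶜ` shows that
`B_{κ²}(W) > b` forces the `B`-functional of the columns in `J` or of those in `Jᶜ` (with
threshold `κ^{-d}`) to be at least `b/2`, and each of them is at most `B_κ(W)`. That event only
sees the columns in `J`, which are independent of the others; conditioning on them, `|Wz| < a`
becomes a small-ball event `|W z_{Jᶜ} - w| < a` with `w` frozen, and rescaling `z_{Jᶜ}` into the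
shell `1/2 ≤ |x| ≤ 3/2` costs the factor `c₂ = max 1 (1/(2√m))` in the radius.
-/

open MeasureTheory ProbabilityTheory

/-- The set `Ω_κ` of admissible coefficient vectors. -/
def OmegaSet (d : ℕ) (κ : ℝ) : Set (Fin d → ℝ) :=
  {α | (∀ i, 0 ≤ α i) ∧ (∀ i, α i ≤ 1) ∧ κ ^ (-(d : ℝ)) ≤ ∏ i, α i}

/-- The refinement `B_κ(W)` of the Hilbert-Schmidt norm. -/
noncomputable def Bkap {N d : ℕ} (κ : ℝ) (W : Matrix (Fin N) (Fin d) ℝ) : ℝ :=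
  sInf {r | ∃ α ∈ OmegaSet d κ, r = ∑ i, α i ^ 2 * euclNorm (fun k => W k i) ^ 2}

open Finset
open scoped ENNReal Matrix

lemma euclNorm_smul {m : ℕ} {t : ℝ} (ht : 0 ≤ t) (v : Fin m → ℝ) :
    euclNorm (t • v) = t * euclNorm v := by
  simp only [euclNorm, Pi.smul_apply, smul_eq_mul, mul_pow, ← mul_sum]
  rw [Real.sqrt_mul (sq_nonneg t), Real.sqrt_sq ht]

@[fun_prop]
lemma continuous_euclNorm {m : ℕ} : Continuous (euclNorm (m := m)) := by
  unfold euclNorm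
  fun_prop

lemma euclNorm_piecewise_zero {m : ℕ} (J : Finset (Fin m)) (v : Fin m → ℝ) :
    euclNorm (J.piecewise v 0) = √(∑ i ∈ J, v i ^ 2) := by
  simp [euclNorm, Finset.piecewise, sum_ite_mem]

lemma euclNorm_piecewise_zero_le {m : ℕ} (J : Finset (Fin m)) (v : Fin m → ℝ) :
    euclNorm (J.piecewise v 0) ≤ euclNorm v := by
  rw [euclNorm_piecewise_zero]
  exact Real.sqrt_le_sqrt (sum_le_univ_sum_of_nonneg fun i => sq_nonneg _)

lemma piecewise_zero_add_compl {ι M : Type*} [Fintype ι] [DecidableEq ι] [AddZeroClass M]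
    (J : Finset ι) (v : ι → M) : J.piecewise v 0 + Jᶜ.piecewise v 0 = v := by
  ext i
  by_cases hi : i ∈ J <;> simp [hi]

lemma sum_smul_piecewise_zero_cols {N d : ℕ} (W : Matrix (Fin N) (Fin d) ℝ) (z : Fin d → ℝ)
    (J : Finset (Fin d)) :
    ∑ i, z i • J.piecewise (fun i k => W k i) 0 i = W *ᵥ J.piecewise z 0 := by
  ext k
  simp only [Matrix.mulVec, dotProduct, Finset.sum_apply, Pi.smul_apply, smul_eq_mul]
  refine sum_congr rfl fun i _ => ?_
  by_cases hi : i ∈ J <;> simp [hi, mul_comm]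

/-- Rescaling `y` by `τ = max 1 (1 / (2 |y|))` moves it into the shell `1/2 ≤ |x| ≤ 3/2`. -/
lemma exists_shell_mulVec_sub_lt {N d : ℕ} {s : ℝ} (hs : 0 < s) {y : Fin d → ℝ}
    (hy : s ≤ euclNorm y) (hy' : euclNorm y ≤ 3 / 2) (w : Fin N → ℝ) :
    ∃ x w', (1 / 2 ≤ euclNorm x ∧ euclNorm x ≤ 3 / 2) ∧
      ∀ (M : Matrix (Fin N) (Fin d) ℝ) (a : ℝ),
        euclNorm (M *ᵥ y - w) < a → euclNorm (M *ᵥ x - w') < max 1 (1 / (2 * s)) * a := by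
  set τ := max 1 (1 / (2 * euclNorm y))
  have hy₀ : 0 < euclNorm y := hs.trans_le hy
  have hτ₀ : 0 < τ := one_pos.trans_le (le_max_left _ _)
  have hτ : τ ≤ max 1 (1 / (2 * s)) :=
    max_le_max le_rfl (one_div_le_one_div_of_le (by positivity) (by linarith))
  have hnorm : euclNorm (τ • y) = max (euclNorm y) (1 / 2) := by
    rw [euclNorm_smul hτ₀.le, mul_comm, mul_max_of_nonneg _ _ hy₀.le]
    field_simp
  refine ⟨τ • y, τ • w, ⟨hnorm ▸ le_max_right _ _, hnorm ▸ max_le hy' (by norm_num)⟩,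
    fun M a h => ?_⟩
  rw [Matrix.mulVec_smul, ← smul_sub, euclNorm_smul hτ₀.le]
  calc τ * euclNorm (M *ᵥ y - w) < τ * a := by gcongr
    _ ≤ max 1 (1 / (2 * s)) * a := by
        gcongr
        exact (Real.sqrt_nonneg _).trans h.le

lemma Finset.exists_subset_sum_mem_Ico {ι : Type*} [DecidableEq ι] (s : Finset ι) (w : ι → ℝ)
    {ε : ℝ} (hε : 0 < ε) (hw : ∀ i ∈ s, w i < ε) (hs : ε ≤ ∑ i ∈ s, w i) :
    ∃ J ⊆ s, ∑ i ∈ J, w i ∈ Set.Ico ε (2 * ε) := by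
  induction s using Finset.induction_on with
  | empty => simp at hs; linarith
  | insert a s ha ih =>
    by_cases hsum : ε ≤ ∑ i ∈ s, w i
    · obtain ⟨J, hJs, hJ⟩ := ih (fun i hi => hw i (mem_insert_of_mem hi)) hsum
      exact ⟨J, hJs.trans (subset_insert a s), hJ⟩
    · refine ⟨insert a s, subset_rfl, hs, ?_⟩
      rw [sum_insert ha]
      linarith [hw a (mem_insert_self a s)]

/-- A single weight `≥ ε` is split off on its own, the other `card ι - 1 ≥ card ι / 2` weights
being `≥ c / card ι`; if there is none, `Finset.exists_subset_sum_mem_Ico` applies. -/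
lemma exists_balanced_split {ι : Type*} [Fintype ι] [DecidableEq ι] (w : ι → ℝ) {c ε : ℝ}
    (hε : 0 < ε) (hc : 0 ≤ c) (hcard : 2 ≤ Fintype.card ι) (hw : ∀ i, c / Fintype.card ι ≤ w i)
    (htot : 3 * ε ≤ ∑ i, w i) :
    ∃ J : Finset ι, min ε (c / 2) ≤ ∑ i ∈ J, w i ∧ min ε (c / 2) ≤ ∑ i ∈ Jᶜ, w i := by
  by_cases hheavy : ∃ j, ε ≤ w j
  · obtain ⟨j, hj⟩ := hheavy
    refine ⟨{j}, by simpa using min_le_of_left_le hj, min_le_of_right_le ?_⟩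
    have hk : (2 : ℝ) ≤ Fintype.card ι := by exact_mod_cast hcard
    have hcompl := card_nsmul_le_sum ({j}ᶜ : Finset ι) w _ fun i _ => hw i
    rw [card_compl, card_singleton, nsmul_eq_mul, Nat.cast_sub (by omega), Nat.cast_one] at hcompl
    refine le_trans ?_ hcompl
    rw [mul_div_assoc', le_div_iff₀ (by linarith)]
    nlinarith
  · push Not at hheavy
    obtain ⟨J, -, hJ₁, hJ₂⟩ := exists_subset_sum_mem_Ico univ w hε (fun i _ => hheavy i)
      (by linarith)
    refine ⟨J, min_le_of_left_le hJ₁, min_le_of_left_le ?_⟩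
    linarith [sum_add_sum_compl J w]

lemma exists_balanced_split_sq {d : ℕ} (hd : 2 ≤ d) {c₁ : ℝ} (hc₁ : 0 ≤ c₁) {z : Fin d → ℝ}
    (hz : 1 / 2 ≤ euclNorm z) (hzk : ∀ k, c₁ / √d ≤ |z k|) :
    ∃ J : Finset (Fin d), min (1 / 12) (c₁ ^ 2 / 2) ≤ ∑ i ∈ J, z i ^ 2 ∧
      min (1 / 12) (c₁ ^ 2 / 2) ≤ ∑ i ∈ Jᶜ, z i ^ 2 := by
  refine exists_balanced_split (fun i => z i ^ 2) (by norm_num) (sq_nonneg c₁) (by simpa)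
    (fun i => ?_) ?_
  · have := pow_le_pow_left₀ (by positivity) (hzk i) 2
    rwa [div_pow, Real.sq_sqrt (Nat.cast_nonneg d), sq_abs, ← Fintype.card_fin d] at this
  · have := (Real.le_sqrt' (by norm_num)).1 hz
    linarith

section restrictedB

variable {ι : Type*}

def admissibleCoeffs (t : ℝ) (J : Finset ι) : Set (ι → ℝ) :=
  {α | α ∈ Set.Icc 0 1 ∧ t ≤ ∏ i ∈ J, α i}

/-- `B_κ` of the columns in `J` as a function of the squared column norms `n`. The threshold `t`
is a parameter because on `J` it stays `κ^{-d}`, with `d` the full dimension. -/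
noncomputable def restrictedB (t : ℝ) (J : Finset ι) (n : ι → ℝ) : ℝ :=
  sInf ((fun α : ι → ℝ => ∑ i ∈ J, α i ^ 2 * n i) '' admissibleCoeffs t J)

variable {t : ℝ} {J : Finset ι} {n : ι → ℝ}

lemma one_mem_admissibleCoeffs (ht : t ≤ 1) : 1 ∈ admissibleCoeffs t J :=
  ⟨⟨zero_le_one, le_rfl⟩, by simpa using ht⟩

lemma bddBelow_image_admissibleCoeffs :
    BddBelow ((fun α : ι → ℝ => ∑ i ∈ J, α i ^ 2 * n i) '' admissibleCoeffs t J) := by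
  refine ⟨-∑ i ∈ J, |n i|, ?_⟩
  rintro _ ⟨α, ⟨⟨h0, h1⟩, -⟩, rfl⟩
  rw [← sum_neg_distrib]
  refine sum_le_sum fun i _ => ?_
  have : α i ^ 2 ≤ 1 := pow_le_one₀ (h0 i) (h1 i)
  nlinarith [neg_abs_le (n i), le_abs_self (n i), sq_nonneg (α i)]

lemma restrictedB_le {α : ι → ℝ} (hα : α ∈ admissibleCoeffs t J) :
    restrictedB t J n ≤ ∑ i ∈ J, α i ^ 2 * n i :=
  csInf_le bddBelow_image_admissibleCoeffs ⟨α, hα, rfl⟩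

lemma le_restrictedB_iff (ht : t ≤ 1) {c : ℝ} :
    c ≤ restrictedB t J n ↔ ∀ α ∈ admissibleCoeffs t J, c ≤ ∑ i ∈ J, α i ^ 2 * n i := by
  rw [restrictedB, le_csInf_iff bddBelow_image_admissibleCoeffs
    ⟨_, Set.mem_image_of_mem _ (one_mem_admissibleCoeffs ht)⟩, Set.forall_mem_image]

lemma restrictedB_congr {n' : ι → ℝ} (h : ∀ i ∈ J, n i = n' i) :
    restrictedB t J n = restrictedB t J n' := by
  unfold restrictedB
  congr 1
  exact Set.image_congr fun α _ => sum_congr rfl fun i hi => by rw [h i hi]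

lemma isClosed_setOf_le_restrictedB (ht : t ≤ 1) (c : ℝ) :
    IsClosed {n : ι → ℝ | c ≤ restrictedB t J n} := by
  simp only [le_restrictedB_iff ht, Set.ofPred_forall]
  exact isClosed_biInter fun α _ => isClosed_le continuous_const (by fun_prop)

lemma restrictedB_mono {K : Finset ι} (hJK : J ⊆ K) (hn : 0 ≤ n) (ht : t ≤ 1) :
    restrictedB t J n ≤ restrictedB t K n := by
  refine (le_restrictedB_iff ht).2 fun α ⟨hα, hαt⟩ => (restrictedB_le ⟨hα, ?_⟩).trans ?_
  · exact hαt.trans <| prod_le_prod_of_subset_of_le_one hJK (fun i _ => hα.1 i)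
      fun i _ _ => hα.2 i
  · exact sum_le_sum_of_subset_of_nonneg hJK fun i _ _ => mul_nonneg (sq_nonneg _) (hn i)

/-- Gluing admissible coefficients on `J` and on `Jᶜ` multiplies the thresholds. -/
lemma restrictedB_mul_le_add [Fintype ι] [DecidableEq ι] {s : ℝ} (hs : s ≤ 1) (ht₀ : 0 ≤ t)
    (ht : t ≤ 1) (J : Finset ι) (n : ι → ℝ) :
    restrictedB (s * t) univ n ≤ restrictedB s J n + restrictedB t Jᶜ n := by
  rw [← sub_le_iff_le_add', le_restrictedB_iff ht]
  rintro α₂ ⟨hα₂, hα₂t⟩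
  rw [sub_le_comm, le_restrictedB_iff hs]
  rintro α₁ ⟨hα₁, hα₁t⟩
  rw [sub_le_iff_le_add]
  calc restrictedB (s * t) univ n ≤ ∑ i, J.piecewise α₁ α₂ i ^ 2 * n i := by
        refine restrictedB_le ⟨J.piecewise_mem_Icc_of_mem_of_mem hα₁ hα₂, ?_⟩
        rw [prod_piecewise, univ_inter, ← compl_eq_univ_sdiff]
        exact mul_le_mul hα₁t hα₂t ht₀ (prod_nonneg fun i _ => hα₁.1 i)
    _ = _ := by
        rw [← sum_add_sum_compl J]
        congr 1 <;> refine sum_congr rfl fun i hi => ?_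
        · rw [J.piecewise_eq_of_mem _ _ hi]
        · rw [J.piecewise_eq_of_notMem _ _ (mem_compl.1 hi)]

end restrictedB

section Bkap

variable {N d : ℕ} {κ : ℝ}

noncomputable def colNormSq (W : Matrix (Fin N) (Fin d) ℝ) (i : Fin d) : ℝ :=
  euclNorm (fun k => W k i) ^ 2

lemma Bkap_eq_restrictedB (κ : ℝ) (W : Matrix (Fin N) (Fin d) ℝ) :
    Bkap κ W = restrictedB (κ ^ (-(d : ℝ))) univ (colNormSq W) := by
  unfold Bkap restrictedB admissibleCoeffs OmegaSet
  congr 1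
  ext r
  simp [Set.mem_Icc, Pi.le_def, colNormSq, eq_comm, and_assoc]

lemma restrictedB_le_Bkap (hκ : 1 ≤ κ) (J : Finset (Fin d)) (W : Matrix (Fin N) (Fin d) ℝ) :
    restrictedB (κ ^ (-(d : ℝ))) J (colNormSq W) ≤ Bkap κ W := by
  rw [Bkap_eq_restrictedB]
  exact restrictedB_mono (subset_univ J) (fun i => sq_nonneg _)
    (Real.rpow_le_one_of_one_le_of_nonpos hκ (by simp))

lemma le_restrictedB_or_of_lt_Bkap_sq (hκ : 1 ≤ κ) (J : Finset (Fin d))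
    {W : Matrix (Fin N) (Fin d) ℝ} {b : ℝ} (hb : b < Bkap (κ ^ 2) W) :
    b / 2 ≤ restrictedB (κ ^ (-(d : ℝ))) J (colNormSq W) ∨
      b / 2 ≤ restrictedB (κ ^ (-(d : ℝ))) Jᶜ (colNormSq W) := by
  have hκ₀ : 0 ≤ κ := zero_le_one.trans hκ
  have ht : κ ^ (-(d : ℝ)) ≤ 1 := Real.rpow_le_one_of_one_le_of_nonpos hκ (by simp)
  have hsplit := restrictedB_mul_le_add ht (Real.rpow_nonneg hκ₀ _) ht J (colNormSq W)
  rw [← Real.mul_rpow hκ₀ hκ₀, ← sq, ← Bkap_eq_restrictedB] at hsplit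
  by_contra! h
  linarith [h.1, h.2]

end Bkap

section Probability

variable {Ω : Type*} [MeasurableSpace Ω] {μ : Measure Ω}

lemma ProbabilityTheory.iIndepFun.indepFun_piecewise_zero {ι E : Type*} [DecidableEq ι]
    [MeasurableSpace E] [Zero E] {f : ι → Ω → E} (hf : iIndepFun f μ)
    (hmeas : ∀ i, Measurable (f i)) {S T : Finset ι} (hST : Disjoint S T) :
    IndepFun (fun ω => S.piecewise (f · ω) 0) (fun ω => T.piecewise (f · ω) 0) μ := by
  let pad (K : Finset ι) (x : K → E) (i : ι) : E := if h : i ∈ K then x ⟨i, h⟩ else 0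
  have hpad (K : Finset ι) : Measurable (pad K) := by
    refine measurable_pi_lambda _ fun i => ?_
    by_cases hi : i ∈ K <;> simp only [pad, hi, dite_true, dite_false]
    exacts [measurable_pi_apply _, measurable_const]
  have hcomp (K : Finset ι) :
      pad K ∘ (fun ω (i : K) => f i ω) = fun ω => K.piecewise (f · ω) 0 := by
    ext ω i
    by_cases hi : i ∈ K <;> simp [pad, hi]
  rw [← hcomp S, ← hcomp T]
  exact (hf.indepFun_finset S T hST hmeas).comp (hpad S) (hpad T)

lemma measurable_piecewise_zero {ι E : Type*} [DecidableEq ι] [MeasurableSpace E] [Zero E]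
    {f : ι → Ω → E} (hf : ∀ i, Measurable (f i)) (K : Finset ι) :
    Measurable fun ω => K.piecewise (f · ω) 0 := by
  refine measurable_pi_lambda _ fun i => ?_
  by_cases hi : i ∈ K <;> simp only [K.piecewise_eq_of_mem, K.piecewise_eq_of_notMem, hi,
    not_false_eq_true]
  exacts [hf i, measurable_const]

/-- Fubini for the joint law `law X ⊗ law Y`. -/
lemma ProbabilityTheory.IndepFun.measure_mem_and_mem_le [IsFiniteMeasure μ] {E F : Type*}
    [MeasurableSpace E] [MeasurableSpace F] {X : Ω → E} {Y : Ω → F} (hXY : IndepFun X Y μ)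
    (hX : Measurable X) (hY : Measurable Y) {C : Set (E × F)} (hC : MeasurableSet C)
    {A : Set E} (hA : MeasurableSet A) {s : ℝ≥0∞} (hs : ∀ x ∈ A, μ {ω | (x, Y ω) ∈ C} ≤ s) :
    μ {ω | (X ω, Y ω) ∈ C ∧ X ω ∈ A} ≤ s * μ {ω | X ω ∈ A} := by
  have hCA : MeasurableSet (C ∩ A ×ˢ Set.univ) := hC.inter (hA.prod MeasurableSet.univ)
  have hmap := (indepFun_iff_map_prod_eq_prod_map_map hX.aemeasurable hY.aemeasurable).1 hXY
  have hslice (x : E) :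
      μ.map Y (Prod.mk x ⁻¹' (C ∩ A ×ˢ Set.univ)) ≤ A.indicator (fun _ => s) x := by
    by_cases hx : x ∈ A
    · rw [Set.indicator_of_mem hx, Measure.map_apply hY (measurable_prodMk_left hCA)]
      exact (measure_mono fun ω hω => hω.1).trans (hs x hx)
    · simp [hx]
  calc μ {ω | (X ω, Y ω) ∈ C ∧ X ω ∈ A}
      = μ.map (fun ω => (X ω, Y ω)) (C ∩ A ×ˢ Set.univ) := by
        rw [Measure.map_apply (hX.prodMk hY) hCA]
        congr 1
        ext ω
        simp
    _ = ∫⁻ x, μ.map Y (Prod.mk x ⁻¹' (C ∩ A ×ˢ Set.univ)) ∂μ.map X := by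
        rw [hmap, Measure.prod_apply hCA]
    _ ≤ ∫⁻ x, A.indicator (fun _ => s) x ∂μ.map X := lintegral_mono hslice
    _ = s * μ {ω | X ω ∈ A} := by
        rw [lintegral_indicator_const hA, Measure.map_apply hX hA]
        rfl

variable {N d : ℕ} {W : Ω → Matrix (Fin N) (Fin d) ℝ}

/-- `Wz = W z_J + W z_{Jᶜ}`, and the event on the right only sees the columns in `J`:
conditioning on them leaves a small-ball event for `W z_{Jᶜ}` with a frozen centre. -/
lemma measure_mulVec_lt_and_mem_le [IsFiniteMeasure μ]
    (hW : ∀ i j, Measurable fun ω => W ω i j) (hind : iIndepFun (fun i ω k => W ω k i) μ)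
    (z : Fin d → ℝ) (J : Finset (Fin d)) {A : Set (Fin d → Fin N → ℝ)} (hA : MeasurableSet A)
    (hAJ : ∀ v v', (∀ i ∈ J, v i = v' i) → v ∈ A → v' ∈ A) (a : ℝ) :
    μ {ω | euclNorm (W ω *ᵥ z) < a ∧ (fun i k => W ω k i) ∈ A} ≤
      (⨆ w, μ {ω | euclNorm (W ω *ᵥ Jᶜ.piecewise z 0 - w) < a}) *
        μ {ω | (fun i k => W ω k i) ∈ A} := by
  have hcol (i : Fin d) : Measurable fun ω k => W ω k i := measurable_pi_lambda _ fun k => hW k i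
  let g (v : Fin d → Fin N → ℝ) : Fin N → ℝ := ∑ i, z i • v i
  have hC : MeasurableSet {p : (Fin d → Fin N → ℝ) × (Fin d → Fin N → ℝ) |
      euclNorm (g p.1 + g p.2) < a} := (isOpen_lt (by fun_prop) continuous_const).measurableSet
  have hsum (M : Matrix (Fin N) (Fin d) ℝ) :
      g (J.piecewise (fun i k => M k i) 0) + g (Jᶜ.piecewise (fun i k => M k i) 0) = M *ᵥ z := by
    simp only [g, sum_smul_piecewise_zero_cols, ← Matrix.mulVec_add, piecewise_zero_add_compl]
  have hmemA (v : Fin d → Fin N → ℝ) : J.piecewise v 0 ∈ A ↔ v ∈ A :=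
    ⟨hAJ _ _ fun i hi => J.piecewise_eq_of_mem _ _ hi,
      hAJ _ _ fun i hi => (J.piecewise_eq_of_mem _ _ hi).symm⟩
  have key := (hind.indepFun_piecewise_zero hcol disjoint_compl_right).measure_mem_and_mem_le
    (measurable_piecewise_zero hcol J) (measurable_piecewise_zero hcol Jᶜ) hC hA
    (s := ⨆ w, μ {ω | euclNorm (W ω *ᵥ Jᶜ.piecewise z 0 - w) < a}) fun x _ => by
      refine le_iSup_of_le (-g x) (measure_mono fun ω hω => ?_)
      simp only [Set.mem_ofPred_eq, sub_neg_eq_add, ← sum_smul_piecewise_zero_cols] at hω ⊢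
      rwa [add_comm]
  simpa only [Set.mem_ofPred_eq, hsum, hmemA] using key

lemma measure_mulVec_lt_and_le_restrictedB_le [IsFiniteMeasure μ] {κ : ℝ} (hκ : 1 ≤ κ)
    (hW : ∀ i j, Measurable fun ω => W ω i j) (hind : iIndepFun (fun i ω k => W ω k i) μ)
    (z : Fin d → ℝ) (J : Finset (Fin d)) (a c : ℝ) :
    μ {ω | euclNorm (W ω *ᵥ z) < a ∧ c ≤ restrictedB (κ ^ (-(d : ℝ))) J (colNormSq (W ω))} ≤
      (⨆ w, μ {ω | euclNorm (W ω *ᵥ Jᶜ.piecewise z 0 - w) < a}) * μ {ω | c ≤ Bkap κ (W ω)} := by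
  have ht : κ ^ (-(d : ℝ)) ≤ 1 := Real.rpow_le_one_of_one_le_of_nonpos hκ (by simp)
  have hA : MeasurableSet {v : Fin d → Fin N → ℝ |
      c ≤ restrictedB (κ ^ (-(d : ℝ))) J fun i => euclNorm (v i) ^ 2} :=
    ((isClosed_setOf_le_restrictedB ht c).preimage (by fun_prop)).measurableSet
  refine (measure_mulVec_lt_and_mem_le hW hind z J hA (fun v v' h hv => ?_) a).trans ?_
  · rwa [Set.mem_ofPred_eq, restrictedB_congr fun i hi => by rw [h i hi]] at hv
  · gcongr
    exact fun hω => hω.trans (restrictedB_le_Bkap hκ J (W _))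

lemma iSup_measure_mulVec_sub_lt_le [IsFiniteMeasure μ] (W : Ω → Matrix (Fin N) (Fin d) ℝ)
    {s : ℝ} (hs : 0 < s) {y : Fin d → ℝ} (hy : s ≤ euclNorm y) (hy' : euclNorm y ≤ 3 / 2)
    (a : ℝ) :
    ⨆ w, μ {ω | euclNorm (W ω *ᵥ y - w) < a} ≤
      ENNReal.ofReal (sSup {r : ℝ | ∃ (x : Fin d → ℝ) (w : Fin N → ℝ),
        1 / 2 ≤ euclNorm x ∧ euclNorm x ≤ 3 / 2 ∧
        r = (μ {ω | euclNorm ((W ω).mulVec x - w) < max 1 (1 / (2 * s)) * a}).toReal}) := by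
  refine iSup_le fun w => ?_
  obtain ⟨x, w', hx, hxw⟩ := exists_shell_mulVec_sub_lt hs hy hy' w
  rw [← ENNReal.ofReal_toReal (measure_ne_top μ _)]
  refine ENNReal.ofReal_le_ofReal (le_csSup_of_le ⟨(μ Set.univ).toReal, ?_⟩
    ⟨x, w', hx.1, hx.2, rfl⟩ (ENNReal.toReal_mono (measure_ne_top μ _)
      (measure_mono fun ω => hxw (W ω) a)))
  rintro _ ⟨x, w, -, -, rfl⟩
  exact ENNReal.toReal_mono (measure_ne_top μ _) (measure_mono (Set.subset_univ _))

end Probability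

/-- decoupling. -/
theorem decoupling_lemma (c₁ : ℝ) (hc₁ : 0 < c₁) :
    ∃ c₂ : ℝ, 0 < c₂ ∧
    ∀ (d N : ℕ), 2 ≤ d → 1 ≤ N →
    ∀ (κ : ℝ), 1 < κ →
    ∀ (Ω : Type) [MeasureSpace Ω] [IsProbabilityMeasure (ℙ : Measure Ω)]
      (W : Ω → Matrix (Fin N) (Fin d) ℝ),
      (∀ i j, Measurable fun ω => W ω i j) →
      -- the columns are independent random vectors
      iIndepFun (fun i : Fin d => fun ω => fun k => W ω k i) ℙ →
      ∀ z : Fin d → ℝ,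
        1 / 2 ≤ euclNorm z → euclNorm z ≤ 3 / 2 →
        (∀ k, c₁ / Real.sqrt d ≤ |z k|) →
        ∀ a b : ℝ, 0 < a → a < b →
          (ℙ {ω | euclNorm ((W ω).mulVec z) < a ∧ b < Bkap (κ ^ 2) (W ω)}).toReal
            ≤ 2 * (ℙ {ω | b / 2 ≤ Bkap κ (W ω)}).toReal *
              sSup {r : ℝ | ∃ (x : Fin d → ℝ) (w : Fin N → ℝ),
                1 / 2 ≤ euclNorm x ∧ euclNorm x ≤ 3 / 2 ∧
                r = (ℙ {ω | euclNorm ((W ω).mulVec x - w) < c₂ * a}).toReal} := by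
  set m : ℝ := min (1 / 12) (c₁ ^ 2 / 2)
  have hm : 0 < m := by positivity
  refine ⟨max 1 (1 / (2 * √m)), by positivity, ?_⟩
  intro d N hd _ κ hκ Ω _ _ W hW hind z hz hz' hzk a b _ _
  obtain ⟨J, hJ, hJc⟩ := exists_balanced_split_sq hd hc₁.le hz hzk
  set S := sSup {r : ℝ | ∃ (x : Fin d → ℝ) (w : Fin N → ℝ), 1 / 2 ≤ euclNorm x ∧
    euclNorm x ≤ 3 / 2 ∧
    r = (ℙ {ω | euclNorm ((W ω).mulVec x - w) < max 1 (1 / (2 * √m)) * a}).toReal}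
  have hS : 0 ≤ S := Real.sSup_nonneg fun _ ⟨_, _, _, _, hr⟩ => hr ▸ ENNReal.toReal_nonneg
  set G := {ω | b / 2 ≤ Bkap κ (W ω)}
  let E (K : Finset (Fin d)) : Set Ω :=
    {ω | euclNorm (W ω *ᵥ z) < a ∧ b / 2 ≤ restrictedB (κ ^ (-(d : ℝ))) K (colNormSq (W ω))}
  have hE (K : Finset (Fin d)) (hK : m ≤ ∑ i ∈ Kᶜ, z i ^ 2) :
      ℙ (E K) ≤ ENNReal.ofReal S * ℙ G := by
    refine (measure_mulVec_lt_and_le_restrictedB_le hκ.le hW hind z K a _).trans ?_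
    gcongr
    refine iSup_measure_mulVec_sub_lt_le W (Real.sqrt_pos.2 hm) ?_
      ((euclNorm_piecewise_zero_le _ z).trans hz') a
    exact (euclNorm_piecewise_zero Kᶜ z).symm ▸ Real.sqrt_le_sqrt hK
  have hsplit : {ω | euclNorm (W ω *ᵥ z) < a ∧ b < Bkap (κ ^ 2) (W ω)} ⊆ E J ∪ E Jᶜ :=
    fun ω hω => (le_restrictedB_or_of_lt_Bkap_sq hκ.le J hω.2).imp (⟨hω.1, ·⟩) (⟨hω.1, ·⟩)
  have key := (measure_mono hsplit).trans <| (measure_union_le _ _).trans <|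
    add_le_add (hE J hJc) (hE Jᶜ (by rwa [compl_compl]))
  refine (ENNReal.toReal_mono (by finiteness) key).trans_eq ?_
  rw [← two_mul, ENNReal.toReal_mul, ENNReal.toReal_mul, ENNReal.toReal_ofReal hS]
  simp only [ENNReal.toReal_ofNat]
  ring
end
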